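/- arXiv:1811.12279 — 2 statements merged into one kernel-verified Lean document; each statement's English description precedes it below -/
import Mathlib

section
/- The support function of the Newton polytope is additive under polynomial multiplication: for nonzero f, g ∈ ℂ[x₁,…,xₙ] and any ω ∈ ℝⁿ, h_{New(fg)}(ω) = h_{New(f)}(ω) + h_{New(g)}(ω). -/
/-!
For a linear functional `ω`, the maximum of `ω` over the convex hull of a finite set is attained
at a point of the set, so `h_{New(p)}(ω)` is the largest `ω`-weight of a monomial of `p`.
Every monomial of `f * g` is a sum of monomials of `f` and `g`, which bounds its weight by the sum
of the two maxima. Conversely, since `σ →₀ ℕ` has unique sums, the faces of `f` and `g` maximising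
the weight contain monomials `a₀, b₀` such that `a₀ + b₀` is reached by no other pair of
monomials of `f` and `g`; its coefficient in `f * g` is the nonzero product of their coefficients.
-/

open Finset

section ConvexHull

variable {𝕜 E : Type*} [Field 𝕜] [LinearOrder 𝕜] [IsStrictOrderedRing 𝕜]
  [AddCommGroup E] [Module 𝕜 E]

theorem upperBounds_convexHull (t : Set 𝕜) : upperBounds (convexHull 𝕜 t) = upperBounds t := by
  ext x
  exact ⟨fun hx => upperBounds_mono_set (subset_convexHull 𝕜 t) hx,
    fun hx => convexHull_min hx (convex_Iic x)⟩

theorem upperBounds_image_convexHull (ℓ : E →ₗ[𝕜] 𝕜) (s : Set E) :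
    upperBounds (ℓ '' convexHull 𝕜 s) = upperBounds (ℓ '' s) := by
  rw [ℓ.image_convexHull, upperBounds_convexHull]

theorem isGreatest_image_of_isGreatest_image_convexHull {ℓ : E →ₗ[𝕜] 𝕜} {s : Set E}
    (hs : s.Finite) {c : 𝕜} (h : IsGreatest (ℓ '' convexHull 𝕜 s) c) :
    IsGreatest (ℓ '' s) c := by
  have hlub : IsLUB (ℓ '' s) c := by
    rw [IsLUB, ← upperBounds_image_convexHull]
    exact h.isLUB
  have hne : (ℓ '' s).Nonempty := by
    obtain ⟨_, hx, -⟩ := h.1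
    exact (convexHull_nonempty_iff.1 ⟨_, hx⟩).image ℓ
  have hfin : (ℓ '' s).Finite := hs.image ℓ
  refine ⟨?_, hlub.1⟩
  rw [← hfin.coe_toFinset] at hlub ⊢
  exact Finset.isLUB_mem _ hlub (hfin.toFinset_nonempty.2 hne)

end ConvexHull

section Weight

variable {α M : Type*} [AddCommMonoid M] [LinearOrder M] [IsOrderedCancelAddMonoid M]

theorem UniqueAdd.of_filter_weight_eq_max [AddMonoid α] {w : α →+ M} {A B : Finset α}
    {a b : M} (hA : ∀ x ∈ A, w x ≤ a) (hB : ∀ y ∈ B, w y ≤ b) {x₀ y₀ : α}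
    (hx₀ : w x₀ = a) (hy₀ : w y₀ = b)
    (h : UniqueAdd {x ∈ A | w x = a} {y ∈ B | w y = b} x₀ y₀) : UniqueAdd A B x₀ y₀ := by
  intro x y hx hy hxy
  have hsum : w x + w y = a + b := by rw [← map_add, hxy, map_add, hx₀, hy₀]
  obtain ⟨hxa, hyb⟩ := (add_eq_add_iff_eq_and_eq (hA x hx) (hB y hy)).1 hsum
  exact h (mem_filter.2 ⟨hx, hxa⟩) (mem_filter.2 ⟨hy, hyb⟩) hxy

variable {σ R : Type*} [CommSemiring R] [NoZeroDivisors R]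

theorem MvPolynomial.isGreatest_image_support_mul (w : (σ →₀ ℕ) →+ M)
    {f g : MvPolynomial σ R} {a b : M}
    (hf : IsGreatest (w '' f.support) a) (hg : IsGreatest (w '' g.support) b) :
    IsGreatest (w '' (f * g).support) (a + b) := by
  classical
  have hfle : ∀ x ∈ f.support, w x ≤ a := fun x hx => hf.2 ⟨x, hx, rfl⟩
  have hgle : ∀ y ∈ g.support, w y ≤ b := fun y hy => hg.2 ⟨y, hy, rfl⟩
  refine ⟨?_, ?_⟩
  · obtain ⟨x, hx, hxa⟩ := hf.1
    obtain ⟨y, hy, hyb⟩ := hg.1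
    obtain ⟨x₀, hx₀, y₀, hy₀, huniq⟩ := UniqueSums.uniqueAdd_of_nonempty
      (A := {x ∈ f.support | w x = a}) (B := {y ∈ g.support | w y = b})
      ⟨x, mem_filter.2 ⟨hx, hxa⟩⟩ ⟨y, mem_filter.2 ⟨hy, hyb⟩⟩
    obtain ⟨hx₀f, hx₀a⟩ := mem_filter.1 hx₀
    obtain ⟨hy₀g, hy₀b⟩ := mem_filter.1 hy₀
    have hcoeff : coeff (x₀ + y₀) (f * g) = coeff x₀ f * coeff y₀ g :=
      AddMonoidAlgebra.coeff_mul_add_of_uniqueAdd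
        (huniq.of_filter_weight_eq_max hfle hgle hx₀a hy₀b)
    refine ⟨x₀ + y₀, ?_, by rw [map_add, hx₀a, hy₀b]⟩
    rw [Finset.mem_coe, mem_support_iff, hcoeff]
    exact mul_ne_zero (mem_support_iff.1 hx₀f) (mem_support_iff.1 hy₀g)
  · rintro _ ⟨d, hd, rfl⟩
    obtain ⟨x, hx, y, hy, rfl⟩ := Finset.mem_add.1 (support_mul f g hd)
    rw [map_add]
    exact add_le_add (hfle x hx) (hgle y hy)

end Weight

theorem dotProduct_natCast_eq_weight {σ : Type*} [Fintype σ] (ω : σ → ℝ) (d : σ →₀ ℕ) :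
    (fun i => (d i : ℝ)) ⬝ᵥ ω = Finsupp.weight ω d := by
  simp [dotProduct, Finsupp.weight_apply, Finsupp.sum_fintype, nsmul_eq_mul]

theorem newton_support_function_additive_general
    (n : ℕ) (f g : MvPolynomial (Fin n) ℂ)
    (ω : Fin n → ℝ) (hfω hgω hfgω : ℝ)
    (hhf : IsGreatest ((fun x => ∑ i, x i * ω i) ''
      convexHull ℝ ((fun d : Fin n →₀ ℕ => fun i => (d i : ℝ)) '' (f.support : Set (Fin n →₀ ℕ)))) hfω)
    (hhg : IsGreatest ((fun x => ∑ i, x i * ω i) ''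
      convexHull ℝ ((fun d : Fin n →₀ ℕ => fun i => (d i : ℝ)) '' (g.support : Set (Fin n →₀ ℕ)))) hgω)
    (hhfg : IsGreatest ((fun x => ∑ i, x i * ω i) ''
      convexHull ℝ ((fun d : Fin n →₀ ℕ => fun i => (d i : ℝ)) '' ((f * g).support : Set (Fin n →₀ ℕ)))) hfgω) :
    hfgω = hfω + hgω := by
  have hweight : ∀ (p : MvPolynomial (Fin n) ℂ) (c : ℝ),
      IsGreatest ((dotProductBilin ℝ ℝ).flip ω ''
        convexHull ℝ ((fun d : Fin n →₀ ℕ => fun i => (d i : ℝ)) '' (p.support : Set _))) c →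
      IsGreatest (Finsupp.weight ω '' (p.support : Set (Fin n →₀ ℕ))) c := by
    intro p c h
    have hcomp : ⇑((dotProductBilin ℝ ℝ).flip ω) ∘ (fun d : Fin n →₀ ℕ => fun i => (d i : ℝ)) =
        Finsupp.weight ω := funext (dotProduct_natCast_eq_weight ω)
    have := isGreatest_image_of_isGreatest_image_convexHull (p.support.finite_toSet.image _) h
    rwa [← Set.image_comp, hcomp] at this
  exact (hweight _ _ hhfg).unique
    (MvPolynomial.isGreatest_image_support_mul _ (hweight _ _ hhf) (hweight _ _ hhg))

/-- The support function of the Newton polytope is additive under multiplication: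
`h_{New(fg)}(ω) = h_{New(f)}(ω) + h_{New(g)}(ω)`. -/
theorem newton_support_function_additive
    (n : ℕ) (f g : MvPolynomial (Fin n) ℂ) (hf : f ≠ 0) (hg : g ≠ 0)
    (ω : Fin n → ℝ) (hfω hgω hfgω : ℝ)
    (hhf : IsGreatest ((fun x => ∑ i, x i * ω i) ''
      convexHull ℝ ((fun d : Fin n →₀ ℕ => fun i => (d i : ℝ)) '' (f.support : Set (Fin n →₀ ℕ)))) hfω)
    (hhg : IsGreatest ((fun x => ∑ i, x i * ω i) ''
      convexHull ℝ ((fun d : Fin n →₀ ℕ => fun i => (d i : ℝ)) '' (g.support : Set (Fin n →₀ ℕ)))) hgω)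
    (hhfg : IsGreatest ((fun x => ∑ i, x i * ω i) ''
      convexHull ℝ ((fun d : Fin n →₀ ℕ => fun i => (d i : ℝ)) '' ((f * g).support : Set (Fin n →₀ ℕ)))) hfgω) :
    hfgω = hfω + hgω :=
  newton_support_function_additive_general n f g ω hfω hgω hfgω hhf hhg hhfg
end

section
/- Key inequality in the convergence proof: with notation as in the HS-algorithm, if p(t) is a root of f(L_t)(s) (i.e., f(L_t)(p(t)) = 0) and ω ∈ trop(V(f)), then |f_ω(a·p(t) − b)| ≤ t^{−d_ω} · Σ_{α ∈ F^c} |c_α| · |(a·p(t) − b)^α| for all t ≥ 1, where (a·s − b)^α denotes Π_i (a_i s − b_i)^{α_i}. -/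
open Finset

/-- The terms indexed by `F` all carry the top power `t ^ h`; dividing the relation by it leaves
the remaining terms with factors `t ^ (e α - h) ≤ t ^ (-δ)`. -/
theorem norm_sum_le_rpow_neg_mul_of_sum_rpow_smul_eq_zero {ι E : Type*} [DecidableEq ι]
    [NormedAddCommGroup E] [NormedSpace ℝ E] {A F : Finset ι} (hFA : F ⊆ A)
    {e : ι → ℝ} {h δ t : ℝ} (ht : 1 ≤ t) (hF : ∀ α ∈ F, e α = h)
    (hgap : ∀ α ∈ A \ F, e α ≤ h - δ) {y : ι → E}
    (hy : ∑ α ∈ A, t ^ e α • y α = 0) :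
    ‖∑ α ∈ F, y α‖ ≤ t ^ (-δ) * ∑ α ∈ A \ F, ‖y α‖ := by
  have ht0 : 0 < t := one_pos.trans_le ht
  have hsplit : t ^ h • ∑ α ∈ F, y α = -∑ α ∈ A \ F, t ^ e α • y α := by
    have hF_sum : ∑ α ∈ F, t ^ e α • y α = t ^ h • ∑ α ∈ F, y α := by
      rw [smul_sum]
      exact sum_congr rfl fun α hα => by rw [hF α hα]
    rw [← sum_sdiff hFA, hF_sum] at hy
    exact (neg_eq_of_add_eq_zero_right hy).symm
  have hcancel : t ^ (-h) * t ^ h = 1 := by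
    rw [← Real.rpow_add ht0, neg_add_cancel, Real.rpow_zero]
  calc ‖∑ α ∈ F, y α‖ = t ^ (-h) * ‖t ^ h • ∑ α ∈ F, y α‖ := by
        rw [norm_smul, Real.norm_of_nonneg (by positivity), ← mul_assoc, hcancel, one_mul]
    _ ≤ t ^ (-h) * ∑ α ∈ A \ F, t ^ (h - δ) * ‖y α‖ := by
        rw [hsplit, norm_neg]
        gcongr
        refine (norm_sum_le _ _).trans (sum_le_sum fun α hα => ?_)
        rw [norm_smul, Real.norm_of_nonneg (by positivity)]
        gcongr
        exact hgap α hα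
    _ = t ^ (-δ) * ∑ α ∈ A \ F, ‖y α‖ := by
        rw [← mul_sum, ← mul_assoc, ← Real.rpow_add ht0]
        ring_nf

theorem hs_key_inequality_general
    (n : ℕ) (A : Finset (Fin n → ℕ))
    (c : (Fin n → ℕ) → ℂ)
    (ω : Fin n → ℝ) (hω : ℝ)
    (F : Finset (Fin n → ℕ))
    (hF : F = A.filter (fun α => ∑ i, ω i * (α i : ℝ) = hω))
    (a b : Fin n → ℂ)
    (dω : ℝ)
    (hdω : IsLeast ((fun α : Fin n → ℕ => hω - ∑ i, ω i * (α i : ℝ)) ''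
      ((A \ F : Finset (Fin n → ℕ)) : Set (Fin n → ℕ))) dω)
    (p : ℝ → ℂ) (t : ℝ) (ht : 1 ≤ t)
    (hroot : ∑ α ∈ A, c α * ((t ^ (∑ i, ω i * (α i : ℝ)) : ℝ) : ℂ) *
        ∏ i, (a i * p t - b i) ^ α i = 0) :
    ‖∑ α ∈ F, c α * ∏ i, (a i * p t - b i) ^ α i‖ ≤
      t ^ (-dω) * ∑ α ∈ A \ F,
        ‖c α‖ * ‖∏ i, (a i * p t - b i) ^ α i‖ := by
  have hFA : F ⊆ A := hF ▸ filter_subset _ _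
  have hinitial : ∀ α ∈ F, ∑ i, ω i * (α i : ℝ) = hω := fun α hα => by
    rw [hF] at hα
    exact (mem_filter.mp hα).2
  have hgap : ∀ α ∈ A \ F, ∑ i, ω i * (α i : ℝ) ≤ hω - dω := fun α hα => by
    have := hdω.2 ⟨α, mem_coe.mpr hα, rfl⟩
    linarith
  have hroot' : ∑ α ∈ A, t ^ (∑ i, ω i * (α i : ℝ)) •
      (c α * ∏ i, (a i * p t - b i) ^ α i) = 0 := by
    simpa only [Complex.real_smul, mul_left_comm, mul_assoc] using hroot
  simpa only [norm_mul] using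
    norm_sum_le_rpow_neg_mul_of_sum_rpow_smul_eq_zero hFA ht hinitial hgap hroot'

/-- Key inequality in the convergence proof: if `p(t)` is a root of `f(L_t)` and
`ω ∈ trop(V(f))`, then
`|f_ω(a·p(t) − b)| ≤ t^{−d_ω} Σ_{α ∈ Fᶜ} |c_α| |(a·p(t) − b)^α|` for `t ≥ 1`. -/
theorem hs_key_inequality
    (n d : ℕ) (A : Finset (Fin n → ℕ)) (hA : A.Nonempty)
    (c : (Fin n → ℕ) → ℂ) (hc : ∀ α ∈ A, c α ≠ 0)
    (hdeg : ∀ α ∈ A, ∑ i, α i ≤ d)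
    (ω : Fin n → ℝ) (hω : ℝ)
    (hmax : IsGreatest ((fun α : Fin n → ℕ => ∑ i, ω i * (α i : ℝ)) ''
      (A : Set (Fin n → ℕ))) hω)
    (F : Finset (Fin n → ℕ))
    (hF : F = A.filter (fun α => ∑ i, ω i * (α i : ℝ) = hω))
    (htrop : 1 < F.card)
    (a b : Fin n → ℂ)
    (dω : ℝ)
    (hdω : IsLeast ((fun α : Fin n → ℕ => hω - ∑ i, ω i * (α i : ℝ)) ''
      ((A \ F : Finset (Fin n → ℕ)) : Set (Fin n → ℕ))) dω)
    (hdωpos : 0 < dω)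
    (p : ℝ → ℂ) (t : ℝ) (ht : 1 ≤ t)
    (hroot : ∑ α ∈ A, c α * ((t ^ (∑ i, ω i * (α i : ℝ)) : ℝ) : ℂ) *
        ∏ i, (a i * p t - b i) ^ α i = 0) :
    ‖∑ α ∈ F, c α * ∏ i, (a i * p t - b i) ^ α i‖ ≤
      t ^ (-dω) * ∑ α ∈ A \ F,
        ‖c α‖ * ‖∏ i, (a i * p t - b i) ^ α i‖ :=
  hs_key_inequality_general n A c ω hω F hF a b dω hdω p t ht hroot
end
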